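/- arXiv:2405.01879 — 3 statements merged into one kernel-verified Lean document; each statement's English description precedes it below -/
import Mathlib

section
/- Let G be a graph and A, X, Y, Z be four disjoint sets of vertices of G. If A is connected and A sees each of X, Y and Z, then A is of type path, of type claw, or of type triangle with respect to X, Y and Z. -/
open SimpleGraph

/-! Basic notions: seeing, anticompleteness, completeness between vertex sets. -/

/-- `Sees G X Y` : some vertex of `X` is adjacent (in `G`) to some vertex of `Y`. -/
def Sees {V : Type} (G : SimpleGraph V) (X Y : Set V) : Prop :=
  ∃ x ∈ X, ∃ y ∈ Y, G.Adj x y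

/-- `X` is anticomplete to `Y` : there is no edge between `X` and `Y`. -/
def Anticomplete {V : Type} (G : SimpleGraph V) (X Y : Set V) : Prop :=
  ∀ x ∈ X, ∀ y ∈ Y, ¬G.Adj x y

/-- `X` is complete to `Y` : every vertex of `X` is adjacent to every vertex of `Y`. -/
def CompleteTo {V : Type} (G : SimpleGraph V) (X Y : Set V) : Prop :=
  ∀ x ∈ X, ∀ y ∈ Y, G.Adj x y

/-- A chordless (induced) path of `G` with all vertices in `A`, given by an injective
enumeration `p` of its vertices, consecutive vertices being exactly the adjacent pairs. -/
def IsPathIn {V : Type} (G : SimpleGraph V) (A : Set V) {n : ℕ} (p : Fin (n + 1) → V) : Prop :=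
  Function.Injective p ∧ (∀ i, p i ∈ A) ∧
    ∀ i j, G.Adj (p i) (p j) ↔ (i.val + 1 = j.val ∨ j.val + 1 = i.val)

/-! Induced minors. -/

/-- An induced minor model of `H` in `G`: pairwise disjoint branch sets, each inducing a
connected subgraph, with an edge between two branch sets iff the corresponding vertices of
`H` are adjacent. -/
def IsInducedMinorModel {V W : Type} (G : SimpleGraph V) (H : SimpleGraph W)
    (X : W → Set V) : Prop :=
  (∀ w, (X w).Nonempty) ∧
    (∀ w, (G.induce (X w)).Connected) ∧
    (Pairwise fun u w => Disjoint (X u) (X w)) ∧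
    (∀ u w, u ≠ w → (Sees G (X u) (X w) ↔ H.Adj u w))

/-- `G` contains `H` as an induced minor. -/
def ContainsInducedMinor {V W : Type} (G : SimpleGraph V) (H : SimpleGraph W) : Prop :=
  ∃ X : W → Set V, IsInducedMinorModel G H X

/-! Thetas, prisms, pyramids, 3-path configurations. -/

/-- The theta graph with two hub vertices (`Sum.inl 0`, `Sum.inl 1`) joined by three paths,
path `i` having length `k i` (hence `k i - 1` internal vertices). -/
def thetaGraph (k : Fin 3 → ℕ) :
    SimpleGraph (Fin 2 ⊕ (Σ i : Fin 3, Fin (k i - 1))) :=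
  SimpleGraph.fromRel fun u v =>
    match u, v with
    | Sum.inl a, Sum.inr ⟨i, j⟩ => (a = 0 ∧ j.val = 0) ∨ (a = 1 ∧ j.val = k i - 2)
    | Sum.inr ⟨i, j⟩, Sum.inr ⟨i', j'⟩ => i = i' ∧ j.val + 1 = j'.val
    | _, _ => False

/-- Admissible path lengths for a theta: all three paths have length at least two. -/
def ThetaLengths (k : Fin 3 → ℕ) : Prop := ∀ i, 2 ≤ k i

/-- The prism graph made of three paths, path `i` having length `l i` (so `l i + 1` vertices
`(i,0),…,(i,l i)`), with triangles on the vertices `(i,0)` and on the vertices `(i, l i)`. -/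
def prismGraph (l : Fin 3 → ℕ) : SimpleGraph (Σ i : Fin 3, Fin (l i + 1)) :=
  SimpleGraph.fromRel fun u v =>
    (u.1 = v.1 ∧ u.2.val + 1 = v.2.val) ∨
      (u.1 ≠ v.1 ∧ ((u.2.val = 0 ∧ v.2.val = 0) ∨ (u.2.val = l u.1 ∧ v.2.val = l v.1)))

/-- Admissible path lengths for a prism: all three paths have length at least one, or one
has length zero and the two others have length at least two. -/
def PrismLengths (l : Fin 3 → ℕ) : Prop :=
  (∀ i, 1 ≤ l i) ∨ (∃ i, l i = 0 ∧ ∀ j, j ≠ i → 2 ≤ l j)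

/-- The pyramid graph with apex `Sum.inl ()` and three paths, path `i` having length `m i`
(its vertices other than the apex being `(i,0),…,(i, m i - 1)`), whose far endpoints
`(i, m i - 1)` form a triangle. -/
def pyramidGraph (m : Fin 3 → ℕ) : SimpleGraph (Unit ⊕ (Σ i : Fin 3, Fin (m i))) :=
  SimpleGraph.fromRel fun u v =>
    match u, v with
    | Sum.inl _, Sum.inr ⟨_, j⟩ => j.val = 0
    | Sum.inr ⟨i, j⟩, Sum.inr ⟨i', j'⟩ =>
        (i = i' ∧ j.val + 1 = j'.val) ∨ (i ≠ i' ∧ j.val = m i - 1 ∧ j'.val = m i' - 1)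
    | _, _ => False

/-- Admissible path lengths for a pyramid: all of length at least one, at most one of
length exactly one. -/
def PyramidLengths (m : Fin 3 → ℕ) : Prop :=
  (∀ i, 1 ≤ m i) ∧ ∃ i, ∀ j, j ≠ i → 2 ≤ m j

/-- `G` contains a theta as an induced subgraph. -/
def ContainsTheta {V : Type} (G : SimpleGraph V) : Prop :=
  ∃ k, ThetaLengths k ∧ Nonempty (thetaGraph k ↪g G)

/-- `G` contains a prism as an induced subgraph. -/
def ContainsPrism {V : Type} (G : SimpleGraph V) : Prop :=
  ∃ l, PrismLengths l ∧ Nonempty (prismGraph l ↪g G)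

/-- `G` contains a pyramid as an induced subgraph. -/
def ContainsPyramid {V : Type} (G : SimpleGraph V) : Prop :=
  ∃ m, PyramidLengths m ∧ Nonempty (pyramidGraph m ↪g G)

/-- `G` contains a 3-path configuration as an induced subgraph. -/
def Contains3PC {V : Type} (G : SimpleGraph V) : Prop :=
  ContainsTheta G ∨ ContainsPrism G ∨ ContainsPyramid G

/-- `G` is (isomorphic to) a theta. -/
def IsThetaGraph {V : Type} (G : SimpleGraph V) : Prop :=
  ∃ k, ThetaLengths k ∧ Nonempty (thetaGraph k ≃g G)

/-- `G` is (isomorphic to) a prism. -/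
def IsPrismGraph {V : Type} (G : SimpleGraph V) : Prop :=
  ∃ l, PrismLengths l ∧ Nonempty (prismGraph l ≃g G)

/-- `G` is (isomorphic to) a pyramid. -/
def IsPyramidGraph {V : Type} (G : SimpleGraph V) : Prop :=
  ∃ m, PyramidLengths m ∧ Nonempty (pyramidGraph m ≃g G)

/-- `G` is a 3-path configuration. -/
def Is3PC {V : Type} (G : SimpleGraph V) : Prop :=
  IsThetaGraph G ∨ IsPrismGraph G ∨ IsPyramidGraph G

/-- `G` contains a triangle. -/
def ContainsTriangle {V : Type} (G : SimpleGraph V) : Prop :=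
  ∃ x y z : V, G.Adj x y ∧ G.Adj y z ∧ G.Adj x z

/-- `S` induces a hole (chordless cycle of length at least 4) in `G`. -/
def IsHole {V : Type} (G : SimpleGraph V) (S : Set V) : Prop :=
  ∃ n, 4 ≤ n ∧ Nonempty (SimpleGraph.cycleGraph n ≃g G.induce S)

/-- The `k × k` grid graph. -/
def gridGraph (k : ℕ) : SimpleGraph (Fin k × Fin k) :=
  SimpleGraph.fromRel fun p q => Nat.dist p.1.val q.1.val + Nat.dist p.2.val q.2.val = 1

/-! Types of connected sets with respect to three sets `X`, `Y`, `Z`. -/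

/-- `A` is of type path centered at `Y` with respect to `X`, `Y`, `Z`: there is a path
`P = x…z` in `A` such that `x` sees `X`, `z` sees `Z`, `P` sees `Y`, `P∖x` is anticomplete
to `X` and `P∖z` is anticomplete to `Z`. -/
def TypePathCenteredMid {V : Type} (G : SimpleGraph V) (A X Y Z : Set V) : Prop :=
  ∃ (n : ℕ) (p : Fin (n + 1) → V),
    IsPathIn G A p ∧
    Sees G {p 0} X ∧ Sees G {p (Fin.last n)} Z ∧ Sees G (Set.range p) Y ∧
    Anticomplete G (Set.range p \ {p 0}) X ∧
    Anticomplete G (Set.range p \ {p (Fin.last n)}) Z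

/-- `A` is of type path with respect to `X`, `Y`, `Z`: it is of type path centered at `X`,
at `Y`, or at `Z`. -/
def TypePath {V : Type} (G : SimpleGraph V) (A X Y Z : Set V) : Prop :=
  TypePathCenteredMid G A Y X Z ∨ TypePathCenteredMid G A X Y Z ∨ TypePathCenteredMid G A X Z Y

/-- `A` is of type claw with respect to `X`, `Y`, `Z`. -/
def TypeClaw {V : Type} (G : SimpleGraph V) (A X Y Z : Set V) : Prop :=
  ∃ (nP nQ nR : ℕ) (p : Fin (nP + 1) → V) (q : Fin (nQ + 1) → V) (r : Fin (nR + 1) → V),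
    IsPathIn G A p ∧ IsPathIn G A q ∧ IsPathIn G A r ∧
    p 0 = q 0 ∧ q 0 = r 0 ∧
    Set.range p ∩ Set.range q ∩ Set.range r = {p 0} ∧
    Anticomplete G (Set.range p \ {p 0}) (Set.range q \ {p 0}) ∧
    Anticomplete G (Set.range p \ {p 0}) (Set.range r \ {p 0}) ∧
    Anticomplete G (Set.range q \ {p 0}) (Set.range r \ {p 0}) ∧
    Sees G {p (Fin.last nP)} X ∧ Sees G {q (Fin.last nQ)} Y ∧ Sees G {r (Fin.last nR)} Z ∧
    Anticomplete G ((Set.range p ∪ Set.range q ∪ Set.range r) \ {p (Fin.last nP)}) X ∧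
    Anticomplete G ((Set.range p ∪ Set.range q ∪ Set.range r) \ {q (Fin.last nQ)}) Y ∧
    Anticomplete G ((Set.range p ∪ Set.range q ∪ Set.range r) \ {r (Fin.last nR)}) Z

/-- `A` is of type triangle with respect to `X`, `Y`, `Z`. -/
def TypeTriangle {V : Type} (G : SimpleGraph V) (A X Y Z : Set V) : Prop :=
  ∃ (nP nQ nR : ℕ) (p : Fin (nP + 1) → V) (q : Fin (nQ + 1) → V) (r : Fin (nR + 1) → V),
    IsPathIn G A p ∧ IsPathIn G A q ∧ IsPathIn G A r ∧
    Disjoint (Set.range p) (Set.range q) ∧ Disjoint (Set.range p) (Set.range r) ∧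
    Disjoint (Set.range q) (Set.range r) ∧
    G.Adj (p 0) (q 0) ∧ G.Adj (q 0) (r 0) ∧ G.Adj (p 0) (r 0) ∧
    (∀ u ∈ Set.range p, ∀ v ∈ Set.range q, G.Adj u v → u = p 0 ∧ v = q 0) ∧
    (∀ u ∈ Set.range q, ∀ v ∈ Set.range r, G.Adj u v → u = q 0 ∧ v = r 0) ∧
    (∀ u ∈ Set.range p, ∀ v ∈ Set.range r, G.Adj u v → u = p 0 ∧ v = r 0) ∧
    Sees G {p (Fin.last nP)} X ∧ Sees G {q (Fin.last nQ)} Y ∧ Sees G {r (Fin.last nR)} Z ∧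
    Anticomplete G ((Set.range p ∪ Set.range q ∪ Set.range r) \ {p (Fin.last nP)}) X ∧
    Anticomplete G ((Set.range p ∪ Set.range q ∪ Set.range r) \ {q (Fin.last nQ)}) Y ∧
    Anticomplete G ((Set.range p ∪ Set.range q ∪ Set.range r) \ {r (Fin.last nR)}) Z

/-! Line graphs and subdivisions. -/

/-- The line graph of `G`: vertices are the edges of `G`, two of them being adjacent iff
they are distinct and share an endpoint. -/
def LineGraph {V : Type} (G : SimpleGraph V) : SimpleGraph G.edgeSet :=
  SimpleGraph.fromRel fun e f => ∃ v : V, v ∈ (e : Sym2 V) ∧ v ∈ (f : Sym2 V)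

/-- The graph obtained from `G` by subdividing the edge `uv` once, the new vertex being
`Option.none`. -/
def subdivideEdge {V : Type} (G : SimpleGraph V) (u v : V) : SimpleGraph (Option V) :=
  SimpleGraph.fromRel fun a b =>
    match a, b with
    | some x, some y => G.Adj x y ∧ ¬(x = u ∧ y = v) ∧ ¬(x = v ∧ y = u)
    | some x, none => x = u ∨ x = v
    | _, _ => False

/-- `IsSubdivision G H` : `H` is (isomorphic to) a graph obtained from `G` by repeatedly
subdividing edges. -/
inductive IsSubdivision : {α : Type} → SimpleGraph α → {β : Type} → SimpleGraph β → Prop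
  | refl {α : Type} (G : SimpleGraph α) : IsSubdivision G G
  | step {α β : Type} {G : SimpleGraph α} {H : SimpleGraph β} {u v : β} :
      IsSubdivision G H → H.Adj u v → IsSubdivision G (subdivideEdge H u v)
  | iso {α β γ : Type} {G : SimpleGraph α} {H : SimpleGraph β} {H' : SimpleGraph γ} :
      IsSubdivision G H → (H ≃g H') → IsSubdivision G H'

/-! Shrink `A` to a minimal connected set `B` that sees `X`, `Y` and `Z`. In `B`, a shortest
path `P` from a vertex seeing `X` to a vertex seeing `Z` is induced, and only its ends see `X`
and `Z`; if `P` sees `Y` it is a path centred at `Y`. Otherwise a shortest path `Q` from a vertex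
seeing `Y` to the neighbourhood of `P` is disjoint from `P`, and only its last vertex `c` has
neighbours on `P`. By minimality of `B`, `Q` cannot see both `X` and `Z`; if it sees `Z`, the
end of `P` seeing `Z` must be the only neighbour of `c` on `P` (otherwise `Q` and the part of `P`
before the first neighbour of `c` would make a smaller such set), so `P ∪ Q` is a path centred
at `Z`, and symmetrically for `X`. If `Q` sees neither, let `w₁` and `w₂` be the first and last
neighbours of `c` along `P`: if `w₁ = w₂` there is a claw centred at `w₁`, if `w₁ w₂` is an edge
there is a triangle `c w₁ w₂`, and otherwise a claw centred at `c`. -/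

section InducedPath

variable {V : Type} {G : SimpleGraph V}

structure IsInducedSeq (G : SimpleGraph V) (n : ℕ) (p : ℕ → V) : Prop where
  injOn : ∀ i ≤ n, ∀ j ≤ n, p i = p j → i = j
  adj_iff : ∀ i ≤ n, ∀ j ≤ n, (G.Adj (p i) (p j) ↔ i + 1 = j ∨ j + 1 = i)

def IsInducedPath (G : SimpleGraph V) (S : Set V) (u v : V) : Prop :=
  ∃ n p, IsInducedSeq G n p ∧ p 0 = u ∧ p n = v ∧ p '' Set.Icc 0 n = S

lemma Nat.exists_least_greatest_of_le {R : ℕ → Prop} {n j : ℕ} (hj : j ≤ n) (hRj : R j) :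
    ∃ j₁ j₂, j₁ ≤ j₂ ∧ j₂ ≤ n ∧ R j₁ ∧ R j₂ ∧ ∀ i ≤ n, R i → j₁ ≤ i ∧ i ≤ j₂ := by
  classical
  have hex : ∃ i, i ≤ n ∧ R i := ⟨j, hj, hRj⟩
  obtain ⟨hj₁, hR₁⟩ := Nat.find_spec hex
  have hbetween : ∀ i ≤ n, R i → Nat.find hex ≤ i ∧ i ≤ Nat.findGreatest R n :=
    fun i hi hRi => ⟨Nat.find_min' hex ⟨hi, hRi⟩, Nat.le_findGreatest hi hRi⟩
  exact ⟨_, _, (hbetween _ hj₁ hR₁).2, Nat.findGreatest_le n, hR₁,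
    Nat.findGreatest_spec hj hRj, hbetween⟩

namespace IsInducedSeq

variable {n : ℕ} {p : ℕ → V}

lemma adj_succ (hp : IsInducedSeq G n p) {i : ℕ} (hi : i < n) : G.Adj (p i) (p (i + 1)) :=
  (hp.adj_iff i hi.le (i + 1) hi).2 (Or.inl rfl)

lemma mem_image_Icc_iff (hp : IsInducedSeq G n p) {a b i : ℕ} (hb : b ≤ n) (hi : i ≤ n) :
    p i ∈ p '' Set.Icc a b ↔ a ≤ i ∧ i ≤ b := by
  refine ⟨?_, fun hi' => ⟨i, hi', rfl⟩⟩
  rintro ⟨j, hj, hji⟩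
  obtain rfl := hp.injOn j (hj.2.trans hb) i hi hji
  exact hj

lemma isInducedPath_image_Icc (hp : IsInducedSeq G n p) {a b : ℕ} (hab : a ≤ b) (hb : b ≤ n) :
    IsInducedPath G (p '' Set.Icc a b) (p a) (p b) := by
  refine ⟨b - a, fun i => p (a + i), ⟨fun i hi j hj hij => ?_, fun i hi j hj => ?_⟩, rfl,
    congrArg p (Nat.add_sub_cancel' hab), ?_⟩
  · have := hp.injOn _ (by omega) _ (by omega) hij
    omega
  · rw [hp.adj_iff _ (by omega) _ (by omega)]
    omega
  · ext x
    constructor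
    · rintro ⟨i, ⟨-, hi⟩, rfl⟩
      exact ⟨a + i, ⟨Nat.le_add_right a i, by omega⟩, rfl⟩
    · rintro ⟨i, ⟨hai, hib⟩, rfl⟩
      exact ⟨i - a, ⟨Nat.zero_le _, by omega⟩, congrArg p (Nat.add_sub_cancel' hai)⟩

end IsInducedSeq

lemma image_Icc_concat {m n : ℕ} (p q : ℕ → V) :
    (fun i => if i ≤ m then p i else q (i - (m + 1))) '' Set.Icc 0 (m + 1 + n) =
      p '' Set.Icc 0 m ∪ q '' Set.Icc 0 n := by
  ext y
  simp only [Set.mem_union, Set.mem_image, Set.mem_Icc]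
  constructor
  · rintro ⟨i, hi, rfl⟩
    split_ifs with h
    · exact Or.inl ⟨i, ⟨hi.1, h⟩, rfl⟩
    · exact Or.inr ⟨i - (m + 1), ⟨Nat.zero_le _, by omega⟩, rfl⟩
  · rintro (⟨i, hi, rfl⟩ | ⟨j, hj, rfl⟩)
    · exact ⟨i, ⟨hi.1, by omega⟩, if_pos hi.2⟩
    · refine ⟨m + 1 + j, ⟨Nat.zero_le _, by omega⟩, ?_⟩
      rw [if_neg (by omega)]
      congr 1
      omega

namespace IsInducedPath

variable {S T : Set V} {u v w x : V}

lemma left_mem (h : IsInducedPath G S u v) : u ∈ S := by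
  obtain ⟨n, p, -, rfl, -, rfl⟩ := h
  exact ⟨0, ⟨le_rfl, Nat.zero_le n⟩, rfl⟩

lemma right_mem (h : IsInducedPath G S u v) : v ∈ S := by
  obtain ⟨n, p, -, -, rfl, rfl⟩ := h
  exact ⟨n, ⟨Nat.zero_le n, le_rfl⟩, rfl⟩

lemma singleton (u : V) : IsInducedPath G {u} u u :=
  ⟨0, fun _ => u, ⟨fun i hi j hj _ => by omega, fun i hi j hj => iff_of_false (G.irrefl)
    (by omega)⟩, rfl, rfl, by simp⟩

lemma reverse (h : IsInducedPath G S u v) : IsInducedPath G S v u := by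
  obtain ⟨n, p, hp, rfl, rfl, rfl⟩ := h
  refine ⟨n, fun i => p (n - i), ⟨fun i hi j hj hij => ?_, fun i hi j hj => ?_⟩, by simp,
    by simp, ?_⟩
  · have := hp.injOn _ (Nat.sub_le n i) _ (Nat.sub_le n j) hij
    omega
  · rw [hp.adj_iff _ (Nat.sub_le n i) _ (Nat.sub_le n j)]
    omega
  · ext x
    constructor
    · rintro ⟨i, -, rfl⟩
      exact ⟨n - i, ⟨Nat.zero_le _, Nat.sub_le n i⟩, rfl⟩
    · rintro ⟨i, ⟨-, hi⟩, rfl⟩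
      exact ⟨n - i, ⟨Nat.zero_le _, Nat.sub_le n i⟩, congrArg p (Nat.sub_sub_self hi)⟩

lemma append (hS : IsInducedPath G S u v) (hT : IsInducedPath G T w x) (hST : Disjoint S T)
    (hedge : ∀ s ∈ S, ∀ t ∈ T, G.Adj s t ↔ s = v ∧ t = w) : IsInducedPath G (S ∪ T) u x := by
  obtain ⟨m, p, hp, rfl, rfl, rfl⟩ := hS
  obtain ⟨n, q, hq, rfl, rfl, rfl⟩ := hT
  have hmem_p : ∀ i ≤ m, p i ∈ p '' Set.Icc 0 m := fun i hi => ⟨i, ⟨Nat.zero_le i, hi⟩, rfl⟩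
  have hmem_q : ∀ j ≤ n, q j ∈ q '' Set.Icc 0 n := fun j hj => ⟨j, ⟨Nat.zero_le j, hj⟩, rfl⟩
  have hne : ∀ i ≤ m, ∀ j ≤ n, p i ≠ q j := fun i hi j hj =>
    Set.disjoint_left.1 hST (hmem_p i hi) ∘ (· ▸ hmem_q j hj)
  have hcross : ∀ i ≤ m, ∀ j ≤ n, G.Adj (p i) (q j) ↔ i = m ∧ j = 0 := fun i hi j hj => by
    rw [hedge _ (hmem_p i hi) _ (hmem_q j hj)]
    exact and_congr ⟨hp.injOn i hi m le_rfl, by rintro rfl; rfl⟩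
      ⟨hq.injOn j hj 0 (Nat.zero_le n), by rintro rfl; rfl⟩
  refine ⟨m + 1 + n, fun i => if i ≤ m then p i else q (i - (m + 1)),
    ⟨fun i hi j hj hij => ?_, fun i hi j hj => ?_⟩, by simp, ?_, image_Icc_concat p q⟩
  · split_ifs at hij with h₁ h₂ h₂
    · exact hp.injOn i h₁ j h₂ hij
    · exact absurd hij (hne i h₁ _ (by omega))
    · exact absurd hij.symm (hne j h₂ _ (by omega))
    · have := hq.injOn _ (by omega) _ (by omega) hij
      omega
  · split_ifs with h₁ h₂ h₂
    · exact hp.adj_iff i h₁ j h₂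
    · rw [hcross i h₁ _ (by omega)]
      omega
    · rw [G.adj_comm, hcross j h₂ _ (by omega)]
      omega
    · rw [hq.adj_iff _ (by omega) _ (by omega)]
      omega
  · simp only [if_neg (show ¬m + 1 + n ≤ m by omega)]
    congr 1
    omega

lemma cons (h : IsInducedPath G S w x) {c : V} (hcS : c ∉ S) (hc : ∀ s ∈ S, G.Adj c s ↔ s = w) :
    IsInducedPath G ({c} ∪ S) c x :=
  (singleton c).append h (Set.disjoint_singleton_left.2 hcS) fun _ hs t ht => by
    rw [Set.mem_singleton_iff.1 hs, hc t ht]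
    simp

lemma connected (h : IsInducedPath G S u v) : (G.induce S).Connected := by
  obtain ⟨n, p, hp, rfl, rfl, rfl⟩ := h
  have hmem : ∀ i ≤ n, p i ∈ p '' Set.Icc 0 n := fun i hi => ⟨i, ⟨Nat.zero_le i, hi⟩, rfl⟩
  have hreach : ∀ i (hi : i ≤ n),
      (G.induce _).Reachable ⟨p 0, hmem 0 (Nat.zero_le n)⟩ ⟨p i, hmem i hi⟩ := by
    intro i hi
    induction i with
    | zero => rfl
    | succ i ih => exact (ih (by omega)).trans (Adj.reachable (hp.adj_succ (by omega)))
  rw [connected_iff_exists_forall_reachable]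
  exact ⟨_, by rintro ⟨_, i, hi, rfl⟩; exact hreach i hi.2⟩

lemma exists_adj_of_ne (h : IsInducedPath G S u v) (huv : u ≠ v) {s : V} (hs : s ∈ S) :
    ∃ t ∈ S, G.Adj s t := by
  obtain ⟨n, p, hp, rfl, rfl, rfl⟩ := h
  obtain ⟨i, ⟨-, hi⟩, rfl⟩ := hs
  have hn : n ≠ 0 := by rintro rfl; exact huv rfl
  rcases Nat.eq_zero_or_pos i with rfl | hi₀
  · exact ⟨p 1, ⟨1, ⟨Nat.zero_le 1, by omega⟩, rfl⟩, hp.adj_succ (by omega)⟩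
  · refine ⟨p (i - 1), ⟨i - 1, ⟨Nat.zero_le _, by omega⟩, rfl⟩, ?_⟩
    have := hp.adj_succ (i := i - 1) (by omega)
    rw [Nat.sub_add_cancel hi₀] at this
    exact this.symm

lemma exists_isPathIn (h : IsInducedPath G S u v) :
    ∃ (n : ℕ) (f : Fin (n + 1) → V),
      IsPathIn G S f ∧ f 0 = u ∧ f (Fin.last n) = v ∧ Set.range f = S := by
  obtain ⟨n, p, hp, rfl, rfl, rfl⟩ := h
  have hrange : Set.range (fun i : Fin (n + 1) => p i) = p '' Set.Icc 0 n := by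
    ext x
    constructor
    · rintro ⟨i, rfl⟩
      exact ⟨i, ⟨Nat.zero_le _, by omega⟩, rfl⟩
    · rintro ⟨i, ⟨-, hi⟩, rfl⟩
      exact ⟨⟨i, by omega⟩, rfl⟩
  refine ⟨n, fun i => p i, ⟨fun i j hij => Fin.ext (hp.injOn _ (by omega) _ (by omega) hij),
    fun i => hrange ▸ ⟨i, rfl⟩, fun i j => hp.adj_iff _ (by omega) _ (by omega)⟩, rfl, rfl,
    hrange⟩

lemma exists_split (h : IsInducedPath G S u v) (hw : w ∈ S) :
    ∃ S₁ S₂, IsInducedPath G S₁ w u ∧ IsInducedPath G S₂ w v ∧ S₁ ∪ S₂ = S ∧ S₁ ∩ S₂ = {w} ∧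
      Anticomplete G (S₁ \ {w}) (S₂ \ {w}) := by
  obtain ⟨n, p, hp, rfl, rfl, rfl⟩ := h
  obtain ⟨j, ⟨-, hj⟩, rfl⟩ := hw
  refine ⟨p '' Set.Icc 0 j, p '' Set.Icc j n,
    (hp.isInducedPath_image_Icc (Nat.zero_le j) hj).reverse, hp.isInducedPath_image_Icc hj le_rfl,
    by rw [← Set.image_union, Set.Icc_union_Icc_eq_Icc (Nat.zero_le j) hj], ?_, ?_⟩
  · ext x
    constructor
    · rintro ⟨⟨i, ⟨-, hi⟩, rfl⟩, hi'⟩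
      rw [hp.mem_image_Icc_iff le_rfl (by omega)] at hi'
      exact congrArg p (by omega)
    · rintro rfl
      exact ⟨⟨j, ⟨Nat.zero_le j, le_rfl⟩, rfl⟩, ⟨j, ⟨le_rfl, hj⟩, rfl⟩⟩
  · rintro _ ⟨⟨i, ⟨-, hi⟩, rfl⟩, hi'⟩ _ ⟨⟨k, hk, rfl⟩, hk'⟩ hadj
    rw [hp.adj_iff i (by omega) k hk.2] at hadj
    have hij : i ≠ j := fun h => hi' (h ▸ rfl)
    have hkj : k ≠ j := fun h => hk' (h ▸ rfl)
    have := hk.1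
    omega

lemma exists_forall_adj_iff_or_exists_segments (h : IsInducedPath G S u v) {c : V}
    (hc : ∃ s ∈ S, G.Adj c s) :
    (∃ w, ∀ s ∈ S, G.Adj c s ↔ s = w) ∨
    ∃ w₁ w₂ S₁ S₂, IsInducedPath G S₁ w₁ u ∧ IsInducedPath G S₂ w₂ v ∧ S₁ ⊆ S ∧ S₂ ⊆ S ∧
      Disjoint S₁ S₂ ∧ (∀ s ∈ S₁, G.Adj c s ↔ s = w₁) ∧ (∀ s ∈ S₂, G.Adj c s ↔ s = w₂) ∧
      ∀ s₁ ∈ S₁, ∀ s₂ ∈ S₂, G.Adj s₁ s₂ → s₁ = w₁ ∧ s₂ = w₂ := by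
  obtain ⟨n, p, hp, rfl, rfl, rfl⟩ := h
  obtain ⟨_, ⟨j, ⟨-, hj⟩, rfl⟩, hcj⟩ := hc
  obtain ⟨j₁, j₂, hj₁₂, hj₂, hc₁, hc₂, hbetween⟩ :=
    Nat.exists_least_greatest_of_le (R := fun i => G.Adj c (p i)) hj hcj
  rcases hj₁₂.eq_or_lt with rfl | hlt
  · refine Or.inl ⟨p j₁, ?_⟩
    rintro _ ⟨i, ⟨-, hi⟩, rfl⟩
    refine ⟨fun hci => congrArg p ?_, fun h => h ▸ hc₁⟩
    have := hbetween i hi hci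
    omega
  refine Or.inr ⟨p j₁, p j₂, p '' Set.Icc 0 j₁, p '' Set.Icc j₂ n,
    (hp.isInducedPath_image_Icc (Nat.zero_le _) (by omega)).reverse,
    hp.isInducedPath_image_Icc hj₂ le_rfl, Set.image_mono (Set.Icc_subset_Icc_right (by omega)),
    Set.image_mono (Set.Icc_subset_Icc_left (Nat.zero_le _)), ?_, ?_, ?_, ?_⟩
  · refine Set.disjoint_left.2 ?_
    rintro _ ⟨i, ⟨-, hi⟩, rfl⟩ hi'
    rw [hp.mem_image_Icc_iff le_rfl (by omega)] at hi'
    omega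
  · rintro _ ⟨i, ⟨-, hi⟩, rfl⟩
    refine ⟨fun hci => congrArg p ?_, fun h => h ▸ hc₁⟩
    have := hbetween i (by omega) hci
    omega
  · rintro _ ⟨i, ⟨hi, hin⟩, rfl⟩
    refine ⟨fun hci => congrArg p ?_, fun h => h ▸ hc₂⟩
    have := hbetween i hin hci
    omega
  · rintro _ ⟨i, ⟨-, hi⟩, rfl⟩ _ ⟨k, ⟨hk, hkn⟩, rfl⟩ hadj
    rw [hp.adj_iff i (by omega) k hkn] at hadj
    exact ⟨congrArg p (by omega), congrArg p (by omega)⟩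

lemma exists_connected_of_not_forall_adj_iff (h : IsInducedPath G S u v)
    (hT : (G.induce T).Connected) (hST : Disjoint S T) {c : V} (hcT : c ∈ T)
    (hc : ∃ s ∈ S, G.Adj c s) (hv : ¬∀ s ∈ S, G.Adj c s ↔ s = v) :
    ∃ C ⊆ S ∪ T, (G.induce C).Connected ∧ u ∈ C ∧ T ⊆ C ∧ v ∉ C := by
  obtain ⟨S₁, w, h₁, hS₁, hcw, hvS₁⟩ :
      ∃ S₁ w, IsInducedPath G S₁ w u ∧ S₁ ⊆ S ∧ G.Adj c w ∧ v ∉ S₁ := by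
    rcases h.exists_forall_adj_iff_or_exists_segments hc with
      ⟨w, hw⟩ | ⟨w₁, w₂, S₁, S₂, h₁, h₂, hS₁, -, hd, hc₁, -, -⟩
    · obtain ⟨s, hs, hcs⟩ := hc
      obtain rfl := (hw s hs).1 hcs
      obtain ⟨S₁, S₂, h₁, h₂, hS, hS₁₂, -⟩ := h.exists_split hs
      refine ⟨S₁, s, h₁, hS ▸ Set.subset_union_left, hcs, fun hvS₁ => hv ?_⟩
      obtain rfl : v = s := hS₁₂.subset ⟨hvS₁, h₂.right_mem⟩
      exact hw
    · exact ⟨S₁, w₁, h₁, hS₁, (hc₁ w₁ h₁.left_mem).2 rfl,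
        fun hvS₁ => Set.disjoint_left.1 hd hvS₁ h₂.right_mem⟩
  refine ⟨S₁ ∪ T, Set.union_subset_union_left T hS₁,
    connected_induce_union h₁.connected.preconnected hT.preconnected h₁.left_mem hcT hcw.symm,
    Or.inl h₁.right_mem, Set.subset_union_right, ?_⟩
  rintro (hv' | hv')
  · exact hvS₁ hv'
  · exact Set.disjoint_left.1 hST h.right_mem hv'

end IsInducedPath

lemma isInducedSeq_of_forall_sub_le_length {B : Set V} {a b : B} (w : (G.induce B).Walk a b)
    (hw : ∀ i j, i ≤ j → j ≤ w.length →
      ∀ r : (G.induce B).Walk (w.getVert i) (w.getVert j), j - i ≤ r.length) :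
    IsInducedSeq G w.length fun i => w.getVert i := by
  have hinj : ∀ i j, i ≤ j → j ≤ w.length → (w.getVert i : V) = w.getVert j → i = j :=
    fun i j hij hj h => by
      have := hw i j hij hj (Walk.nil.copy rfl (Subtype.ext h))
      simp only [Walk.length_copy, Walk.length_nil] at this
      omega
  have hadj : ∀ i j, i ≤ j → j ≤ w.length → G.Adj (w.getVert i) (w.getVert j) → j = i + 1 :=
    fun i j hij hj h => by
      have : j - i ≤ 1 := hw i j hij hj (Walk.cons h Walk.nil)
      have hne : i ≠ j := by rintro rfl; exact G.ne_of_adj h rfl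
      omega
  refine ⟨fun i hi j hj h => ?_, fun i hi j hj => ⟨fun h => ?_, ?_⟩⟩
  · rcases le_total i j with hij | hji
    · exact hinj i j hij hj h
    · exact (hinj j i hji hi h.symm).symm
  · rcases le_total i j with hij | hji
    · exact Or.inl (hadj i j hij hj h).symm
    · exact Or.inr (hadj j i hji hi h.symm).symm
  · rintro (rfl | rfl)
    · exact w.adj_getVert_succ (by omega)
    · exact (w.adj_getVert_succ (by omega)).symm

lemma exists_isInducedPath_of_forall_length_le {B U W : Set V} {a b : B}
    (w : (G.induce B).Walk a b) (ha : (a : V) ∈ U) (hb : (b : V) ∈ W)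
    (hmin : ∀ (a' b' : B) (w' : (G.induce B).Walk a' b'), (a' : V) ∈ U → (b' : V) ∈ W →
      w.length ≤ w'.length) :
    ∃ S u v, S ⊆ B ∧ IsInducedPath G S u v ∧ S ∩ U = {u} ∧ S ∩ W = {v} := by
  have hw := isInducedSeq_of_forall_sub_le_length w fun i j hij hj r => by
    have := hmin _ _ (((w.take i).append r).append (w.drop j)) ha hb
    simp only [Walk.length_append, Walk.take_length, Walk.drop_length] at this
    omega
  set p : ℕ → V := fun i => w.getVert i
  refine ⟨p '' Set.Icc 0 w.length, p 0, p w.length, ?_, ⟨_, p, hw, rfl, rfl, rfl⟩, ?_, ?_⟩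
  · rintro _ ⟨i, -, rfl⟩
    exact (w.getVert i).2
  · refine Set.ext fun s => ⟨?_, ?_⟩
    · rintro ⟨⟨i, ⟨-, hi⟩, rfl⟩, hiU⟩
      have := hmin _ _ (w.drop i) hiU hb
      simp only [Walk.drop_length] at this
      exact congrArg p (by omega)
    · rintro rfl
      exact ⟨⟨0, ⟨le_rfl, Nat.zero_le _⟩, rfl⟩, by simpa [p] using ha⟩
  · refine Set.ext fun s => ⟨?_, ?_⟩
    · rintro ⟨⟨i, ⟨-, hi⟩, rfl⟩, hiW⟩
      have := hmin _ _ (w.take i) ha hiW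
      simp only [Walk.take_length] at this
      exact congrArg p (by omega)
    · rintro rfl
      exact ⟨⟨_, ⟨Nat.zero_le _, le_rfl⟩, rfl⟩, by simpa [p] using hb⟩

lemma exists_isInducedPath_inter_eq {B U W : Set V} (hB : (G.induce B).Connected)
    (hU : (B ∩ U).Nonempty) (hW : (B ∩ W).Nonempty) :
    ∃ S u v, S ⊆ B ∧ IsInducedPath G S u v ∧ S ∩ U = {u} ∧ S ∩ W = {v} := by
  classical
  obtain ⟨a₀, ha₀B, ha₀⟩ := hU
  obtain ⟨b₀, hb₀B, hb₀⟩ := hW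
  have hex : ∃ k, ∃ (a b : B) (w : (G.induce B).Walk a b), (a : V) ∈ U ∧ (b : V) ∈ W ∧
      w.length = k :=
    ⟨_, ⟨a₀, ha₀B⟩, ⟨b₀, hb₀B⟩, (hB.preconnected _ _).some, ha₀, hb₀, rfl⟩
  obtain ⟨a, b, w, ha, hb, hlen⟩ := Nat.find_spec hex
  exact exists_isInducedPath_of_forall_length_le w ha hb fun a' b' w' ha' hb' =>
    hlen ▸ Nat.find_min' hex ⟨a', b', w', ha', hb', rfl⟩

end InducedPath

section Configurations

variable {V : Type} {G : SimpleGraph V} {A B S T X Y Z : Set V}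

lemma Sees.mono_left (h : Sees G S X) (hST : S ⊆ T) : Sees G T X := by
  obtain ⟨s, hs, x, hx, hsx⟩ := h
  exact ⟨s, hST hs, x, hx, hsx⟩

lemma sees_singleton_iff {c : V} : Sees G {c} S ↔ ∃ s ∈ S, G.Adj c s := by
  simp [Sees]

lemma Anticomplete.mono {S' T' : Set V} (h : Anticomplete G S T) (hS : S' ⊆ S) (hT : T' ⊆ T) :
    Anticomplete G S' T' :=
  fun s hs t ht => h s (hS hs) t (hT ht)

lemma Anticomplete.symm (h : Anticomplete G S T) : Anticomplete G T S :=
  fun t ht s hs hts => h s hs t ht hts.symm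

lemma Anticomplete.union_left (hS : Anticomplete G S X) (hT : Anticomplete G T X) :
    Anticomplete G (S ∪ T) X := by
  rintro s (hs | hs)
  exacts [hS s hs, hT s hs]

lemma anticomplete_iff_not_sees : Anticomplete G S X ↔ ¬Sees G S X := by
  simp [Anticomplete, Sees]

lemma IsPathIn.mono {n : ℕ} {p : Fin (n + 1) → V} (h : IsPathIn G S p) (hSA : S ⊆ A) :
    IsPathIn G A p :=
  ⟨h.1, fun i => hSA (h.2.1 i), h.2.2⟩

lemma typeClaw_of_isInducedPath {S₁ S₂ S₃ : Set V} {a x y z : V}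
    (h₁ : IsInducedPath G S₁ a x) (h₂ : IsInducedPath G S₂ a y) (h₃ : IsInducedPath G S₃ a z)
    (hA : S₁ ∪ S₂ ∪ S₃ ⊆ A) (h₁₂₃ : S₁ ∩ S₂ ∩ S₃ = {a})
    (h₁₂ : Anticomplete G (S₁ \ {a}) (S₂ \ {a})) (h₁₃ : Anticomplete G (S₁ \ {a}) (S₃ \ {a}))
    (h₂₃ : Anticomplete G (S₂ \ {a}) (S₃ \ {a}))
    (hx : Sees G {x} X) (hy : Sees G {y} Y) (hz : Sees G {z} Z)
    (hX : Anticomplete G ((S₁ ∪ S₂ ∪ S₃) \ {x}) X) (hY : Anticomplete G ((S₁ ∪ S₂ ∪ S₃) \ {y}) Y)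
    (hZ : Anticomplete G ((S₁ ∪ S₂ ∪ S₃) \ {z}) Z) :
    TypeClaw G A X Y Z := by
  obtain ⟨n₁, p₁, hp₁, rfl, rfl, rfl⟩ := h₁.exists_isPathIn
  obtain ⟨n₂, p₂, hp₂, h₂₀, rfl, rfl⟩ := h₂.exists_isPathIn
  obtain ⟨n₃, p₃, hp₃, h₃₀, rfl, rfl⟩ := h₃.exists_isPathIn
  exact ⟨n₁, n₂, n₃, p₁, p₂, p₃,
    hp₁.mono ((Set.subset_union_left.trans Set.subset_union_left).trans hA),
    hp₂.mono ((Set.subset_union_right.trans Set.subset_union_left).trans hA),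
    hp₃.mono (Set.subset_union_right.trans hA), h₂₀.symm, h₂₀.trans h₃₀.symm, h₁₂₃, h₁₂, h₁₃,
    h₂₃, hx, hy, hz, hX, hY, hZ⟩

lemma typeTriangle_of_isInducedPath {S₁ S₂ S₃ : Set V} {a b c x y z : V}
    (h₁ : IsInducedPath G S₁ a x) (h₂ : IsInducedPath G S₂ b y) (h₃ : IsInducedPath G S₃ c z)
    (hA : S₁ ∪ S₂ ∪ S₃ ⊆ A) (hd₁₂ : Disjoint S₁ S₂) (hd₁₃ : Disjoint S₁ S₃)
    (hd₂₃ : Disjoint S₂ S₃) (hab : G.Adj a b) (hbc : G.Adj b c) (hac : G.Adj a c)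
    (h₁₂ : ∀ s ∈ S₁, ∀ t ∈ S₂, G.Adj s t → s = a ∧ t = b)
    (h₂₃ : ∀ s ∈ S₂, ∀ t ∈ S₃, G.Adj s t → s = b ∧ t = c)
    (h₁₃ : ∀ s ∈ S₁, ∀ t ∈ S₃, G.Adj s t → s = a ∧ t = c)
    (hx : Sees G {x} X) (hy : Sees G {y} Y) (hz : Sees G {z} Z)
    (hX : Anticomplete G ((S₁ ∪ S₂ ∪ S₃) \ {x}) X) (hY : Anticomplete G ((S₁ ∪ S₂ ∪ S₃) \ {y}) Y)
    (hZ : Anticomplete G ((S₁ ∪ S₂ ∪ S₃) \ {z}) Z) :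
    TypeTriangle G A X Y Z := by
  obtain ⟨n₁, p₁, hp₁, rfl, rfl, rfl⟩ := h₁.exists_isPathIn
  obtain ⟨n₂, p₂, hp₂, rfl, rfl, rfl⟩ := h₂.exists_isPathIn
  obtain ⟨n₃, p₃, hp₃, rfl, rfl, rfl⟩ := h₃.exists_isPathIn
  exact ⟨n₁, n₂, n₃, p₁, p₂, p₃,
    hp₁.mono ((Set.subset_union_left.trans Set.subset_union_left).trans hA),
    hp₂.mono ((Set.subset_union_right.trans Set.subset_union_left).trans hA),
    hp₃.mono (Set.subset_union_right.trans hA), hd₁₂, hd₁₃, hd₂₃, hab, hbc, hac, h₁₂, h₂₃, h₁₃,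
    hx, hy, hz, hX, hY, hZ⟩

structure IsDirectPath (G : SimpleGraph V) (S : Set V) (u v : V) (X Z : Set V) : Prop where
  isInducedPath : IsInducedPath G S u v
  sees_left : Sees G {u} X
  sees_right : Sees G {v} Z
  anticomplete_left : Anticomplete G (S \ {u}) X
  anticomplete_right : Anticomplete G (S \ {v}) Z

namespace IsDirectPath

variable {u v : V}

lemma symm (h : IsDirectPath G S u v X Z) : IsDirectPath G S v u Z X :=
  ⟨h.isInducedPath.reverse, h.sees_right, h.sees_left, h.anticomplete_right, h.anticomplete_left⟩

lemma typePathCenteredMid (h : IsDirectPath G S u v X Z) (hSA : S ⊆ A) (hY : Sees G S Y) :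
    TypePathCenteredMid G A X Y Z := by
  obtain ⟨n, p, hp, rfl, rfl, rfl⟩ := h.isInducedPath.exists_isPathIn
  exact ⟨n, p, hp.mono hSA, h.sees_left, h.sees_right, hY, h.anticomplete_left,
    h.anticomplete_right⟩

end IsDirectPath

lemma sees_and_anticomplete_of_inter_eq {u : V} (h : S ∩ {b | Sees G {b} X} = {u}) :
    Sees G {u} X ∧ Anticomplete G (S \ {u}) X := by
  refine ⟨(h.symm.subset rfl).2, fun s hs x hx hsx => hs.2 ?_⟩
  exact h.subset ⟨hs.1, s, rfl, x, hx, hsx⟩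

lemma exists_isDirectPath (hB : (G.induce B).Connected) (hX : Sees G B X) (hZ : Sees G B Z) :
    ∃ S u v, S ⊆ B ∧ IsDirectPath G S u v X Z := by
  obtain ⟨a, ha, x, hx, hax⟩ := hX
  obtain ⟨b, hb, z, hz, hbz⟩ := hZ
  obtain ⟨S, u, v, hSB, hS, hSX, hSZ⟩ := exists_isInducedPath_inter_eq hB
    (U := {b | Sees G {b} X}) (W := {b | Sees G {b} Z})
    ⟨a, ha, a, rfl, x, hx, hax⟩ ⟨b, hb, b, rfl, z, hz, hbz⟩
  obtain ⟨hu, huX⟩ := sees_and_anticomplete_of_inter_eq hSX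
  obtain ⟨hv, hvZ⟩ := sees_and_anticomplete_of_inter_eq hSZ
  exact ⟨S, u, v, hSB, hS, hu, hv, huX, hvZ⟩

lemma exists_isDirectPath_of_anticomplete {P : Set V} (hB : (G.induce B).Connected)
    (hY : Sees G B Y) (hPB : P ⊆ B) (hP : P.Nonempty) (hPY : Anticomplete G P Y) :
    ∃ Q y c, Q ⊆ B ∧ IsDirectPath G Q y c Y P ∧ Disjoint Q P := by
  obtain ⟨a, ha, y₀, hy₀, hay₀⟩ := hY
  obtain ⟨p, hp⟩ := hP
  -- Aiming at `P` together with its neighbours, not at its neighbours alone, keeps `Q` off `P`.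
  obtain ⟨Q, y, c, hQB, hQ, hQY, hQP⟩ := exists_isInducedPath_inter_eq hB
    (U := {b | Sees G {b} Y}) (W := {b | b ∈ P ∨ Sees G {b} P})
    ⟨a, ha, a, rfl, y₀, hy₀, hay₀⟩ ⟨p, hPB hp, Or.inl hp⟩
  obtain ⟨hy, hyY⟩ := sees_and_anticomplete_of_inter_eq hQY
  have hW : ∀ s ∈ Q, (s ∈ P ∨ Sees G {s} P) → s = c := fun s hs hsW => hQP.subset ⟨hs, hsW⟩
  have hcP : c ∉ P := by
    intro hcP
    have hyc : y ≠ c := by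
      rintro rfl
      obtain ⟨_, rfl, y', hy', hyy'⟩ := hy
      exact hPY _ hcP y' hy' hyy'
    obtain ⟨t, ht, hct⟩ := hQ.reverse.exists_adj_of_ne hyc.symm hQ.right_mem
    exact G.ne_of_adj hct (hW t ht (Or.inr ⟨t, rfl, c, hcP, hct.symm⟩)).symm
  have hc : Sees G {c} P := (hQP.symm.subset rfl).2.resolve_left hcP
  refine ⟨Q, y, c, hQB, ⟨hQ, hy, hc, hyY, ?_⟩, ?_⟩
  · rintro s ⟨hs, hsc⟩ t ht hst
    exact hsc (hW s hs (Or.inr ⟨s, rfl, t, ht, hst⟩))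
  · exact Set.disjoint_left.2 fun s hs hsP => hcP (hW s hs (Or.inl hsP) ▸ hsP)

def Connects (G : SimpleGraph V) (X Y Z C : Set V) : Prop :=
  (G.induce C).Connected ∧ Sees G C X ∧ Sees G C Y ∧ Sees G C Z

lemma connects_comm : Connects G X Y Z = Connects G Z Y X := by
  ext C
  unfold Connects
  tauto

structure IsPathWithBranch (G : SimpleGraph V) (X Y Z P Q : Set V) (u v y c : V) : Prop where
  path : IsDirectPath G P u v X Z
  branch : IsDirectPath G Q y c Y P
  disjoint : Disjoint Q P
  anticomplete : Anticomplete G P Y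

namespace IsPathWithBranch

variable {P Q : Set V} {u v y c : V}

lemma symm (h : IsPathWithBranch G X Y Z P Q u v y c) : IsPathWithBranch G Z Y X P Q v u y c :=
  ⟨h.path.symm, h.branch, h.disjoint, h.anticomplete⟩

lemma exists_adj (h : IsPathWithBranch G X Y Z P Q u v y c) : ∃ s ∈ P, G.Adj c s :=
  sees_singleton_iff.1 h.branch.sees_right

lemma eq_of_adj (h : IsPathWithBranch G X Y Z P Q u v y c) {s t : V} (hs : s ∈ Q) (ht : t ∈ P)
    (hst : G.Adj s t) : s = c := by
  by_contra hsc
  exact h.branch.anticomplete_right s ⟨hs, hsc⟩ t ht hst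

lemma anticomplete_left (h : IsPathWithBranch G X Y Z P Q u v y c) (hQX : Anticomplete G Q X) :
    Anticomplete G ((P ∪ Q) \ {u}) X := by
  refine (h.path.anticomplete_left.union_left hQX).mono ?_ subset_rfl
  rw [Set.union_sdiff_distrib]
  exact Set.union_subset_union_right _ Set.sdiff_subset

lemma anticomplete_branch (h : IsPathWithBranch G X Y Z P Q u v y c) :
    Anticomplete G ((P ∪ Q) \ {y}) Y := by
  refine (h.anticomplete.union_left h.branch.anticomplete_left).mono ?_ subset_rfl
  rw [Set.union_sdiff_distrib]
  exact Set.union_subset_union_left _ Set.sdiff_subset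

lemma isDirectPath_union (h : IsPathWithBranch G X Y Z P Q u v y c)
    (hcv : ∀ s ∈ P, G.Adj c s ↔ s = v) (hQX : Anticomplete G Q X) :
    IsDirectPath G (P ∪ Q) u y X Y := by
  refine ⟨h.path.isInducedPath.append h.branch.isInducedPath.reverse h.disjoint.symm ?_,
    h.path.sees_left, h.branch.sees_left, h.anticomplete_left hQX, h.anticomplete_branch⟩
  intro s hs t ht
  refine ⟨fun hst => ?_, ?_⟩
  · obtain rfl := h.eq_of_adj ht hs hst.symm
    exact ⟨(hcv s hs).1 hst.symm, rfl⟩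
  · rintro ⟨rfl, rfl⟩
    exact ((hcv s hs).2 rfl).symm

lemma adj_iff_eq_right_of_sees (h : IsPathWithBranch G X Y Z P Q u v y c)
    (hB : Minimal (Connects G X Y Z) B) (hPQB : P ∪ Q ⊆ B) (hQZ : Sees G Q Z) :
    ∀ s ∈ P, G.Adj c s ↔ s = v := by
  by_contra hv
  have hy := h.branch.isInducedPath.left_mem
  obtain ⟨C, hCPQ, hC, huC, hQC, hvC⟩ :=
    h.path.isInducedPath.exists_connected_of_not_forall_adj_iff h.branch.isInducedPath.connected
      h.disjoint.symm h.branch.isInducedPath.right_mem h.exists_adj hv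
  have hCB : Connects G X Y Z C :=
    ⟨hC, h.path.sees_left.mono_left (Set.singleton_subset_iff.2 huC),
      h.branch.sees_left.mono_left (Set.singleton_subset_iff.2 (hQC hy)), hQZ.mono_left hQC⟩
  exact hvC (hB.le_of_le hCB (hCPQ.trans hPQB) (hPQB (Or.inl h.path.isInducedPath.right_mem)))

lemma typeClaw_of_subset (h : IsPathWithBranch G X Y Z P Q u v y c) (hQX : Anticomplete G Q X)
    (hQZ : Anticomplete G Q Z) (hA : P ∪ Q ⊆ A) {S₁ S₂ S₃ : Set V} {a : V}
    (h₁ : IsInducedPath G S₁ a u) (h₂ : IsInducedPath G S₂ a y) (h₃ : IsInducedPath G S₃ a v)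
    (hsub : S₁ ∪ S₂ ∪ S₃ ⊆ P ∪ Q) (h₁₂₃ : S₁ ∩ S₂ ∩ S₃ = {a})
    (h₁₂ : Anticomplete G (S₁ \ {a}) (S₂ \ {a})) (h₁₃ : Anticomplete G (S₁ \ {a}) (S₃ \ {a}))
    (h₂₃ : Anticomplete G (S₂ \ {a}) (S₃ \ {a})) :
    TypeClaw G A X Y Z :=
  typeClaw_of_isInducedPath h₁ h₂ h₃ (hsub.trans hA) h₁₂₃ h₁₂ h₁₃ h₂₃ h.path.sees_left
    h.branch.sees_left h.path.sees_right
    ((h.anticomplete_left hQX).mono (Set.sdiff_subset_sdiff_left hsub) subset_rfl)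
    (h.anticomplete_branch.mono (Set.sdiff_subset_sdiff_left hsub) subset_rfl)
    ((h.symm.anticomplete_left hQZ).mono (Set.sdiff_subset_sdiff_left hsub) subset_rfl)

lemma typeTriangle_of_subset (h : IsPathWithBranch G X Y Z P Q u v y c)
    (hQX : Anticomplete G Q X) (hQZ : Anticomplete G Q Z) (hA : P ∪ Q ⊆ A) {S₁ S₂ S₃ : Set V}
    {a b d : V} (h₁ : IsInducedPath G S₁ a u) (h₂ : IsInducedPath G S₂ b y)
    (h₃ : IsInducedPath G S₃ d v) (hsub : S₁ ∪ S₂ ∪ S₃ ⊆ P ∪ Q) (hd₁₂ : Disjoint S₁ S₂)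
    (hd₁₃ : Disjoint S₁ S₃) (hd₂₃ : Disjoint S₂ S₃) (hab : G.Adj a b) (hbd : G.Adj b d)
    (had : G.Adj a d) (h₁₂ : ∀ s ∈ S₁, ∀ t ∈ S₂, G.Adj s t → s = a ∧ t = b)
    (h₂₃ : ∀ s ∈ S₂, ∀ t ∈ S₃, G.Adj s t → s = b ∧ t = d)
    (h₁₃ : ∀ s ∈ S₁, ∀ t ∈ S₃, G.Adj s t → s = a ∧ t = d) :
    TypeTriangle G A X Y Z :=
  typeTriangle_of_isInducedPath h₁ h₂ h₃ (hsub.trans hA) hd₁₂ hd₁₃ hd₂₃ hab hbd had h₁₂ h₂₃ h₁₃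
    h.path.sees_left h.branch.sees_left h.path.sees_right
    ((h.anticomplete_left hQX).mono (Set.sdiff_subset_sdiff_left hsub) subset_rfl)
    (h.anticomplete_branch.mono (Set.sdiff_subset_sdiff_left hsub) subset_rfl)
    ((h.symm.anticomplete_left hQZ).mono (Set.sdiff_subset_sdiff_left hsub) subset_rfl)

lemma typeClaw_of_forall_adj_iff (h : IsPathWithBranch G X Y Z P Q u v y c)
    (hQX : Anticomplete G Q X) (hQZ : Anticomplete G Q Z) (hA : P ∪ Q ⊆ A) {w : V}
    (hwP : w ∈ P) (hw : ∀ s ∈ P, G.Adj c s ↔ s = w) : TypeClaw G A X Y Z := by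
  -- When `w` is an end of `P`, the corresponding leg of the claw is just `w`.
  obtain ⟨S₁, S₃, h₁, h₃, hP, hS₁₃, h₁₃⟩ := h.path.isInducedPath.exists_split hwP
  have hS₁ : S₁ ⊆ P := hP ▸ Set.subset_union_left
  have hS₃ : S₃ ⊆ P := hP ▸ Set.subset_union_right
  have hwQ : w ∉ Q := fun hwQ => Set.disjoint_left.1 h.disjoint hwQ hwP
  have h₂ : IsInducedPath G ({w} ∪ Q) w y :=
    h.branch.isInducedPath.reverse.cons hwQ fun t ht =>
      ⟨fun hwt => h.eq_of_adj ht hwP hwt.symm, by rintro rfl; exact ((hw w hwP).2 rfl).symm⟩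
  have hcross : Anticomplete G (P \ {w}) Q := by
    rintro s ⟨hs, hsw⟩ t ht hst
    obtain rfl := h.eq_of_adj ht hs hst.symm
    exact hsw ((hw s hs).1 hst.symm)
  have hQw : ({w} ∪ Q) \ {w} ⊆ Q := Set.union_sdiff_left.subset.trans Set.sdiff_subset
  refine h.typeClaw_of_subset hQX hQZ hA h₁ h₂ h₃ (by grind) ?_
    (hcross.mono (Set.sdiff_subset_sdiff_left hS₁) hQw) h₁₃
    (hcross.mono (Set.sdiff_subset_sdiff_left hS₃) hQw).symm
  have := h₁.left_mem
  grind

lemma typeTriangle_or_typeClaw (h : IsPathWithBranch G X Y Z P Q u v y c)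
    (hQX : Anticomplete G Q X) (hQZ : Anticomplete G Q Z) (hA : P ∪ Q ⊆ A)
    {w₁ w₂ : V} {S₁ S₂ : Set V} (h₁ : IsInducedPath G S₁ w₁ u) (h₂ : IsInducedPath G S₂ w₂ v)
    (hS₁ : S₁ ⊆ P) (hS₂ : S₂ ⊆ P) (hd : Disjoint S₁ S₂) (hc₁ : ∀ s ∈ S₁, G.Adj c s ↔ s = w₁)
    (hc₂ : ∀ s ∈ S₂, G.Adj c s ↔ s = w₂)
    (h₁₂ : ∀ s₁ ∈ S₁, ∀ s₂ ∈ S₂, G.Adj s₁ s₂ → s₁ = w₁ ∧ s₂ = w₂) :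
    TypeTriangle G A X Y Z ∨ TypeClaw G A X Y Z := by
  have hcw₁ : G.Adj c w₁ := (hc₁ w₁ h₁.left_mem).2 rfl
  have hcw₂ : G.Adj c w₂ := (hc₂ w₂ h₂.left_mem).2 rfl
  have hcP : c ∉ P := fun hcP => Set.disjoint_left.1 h.disjoint h.branch.isInducedPath.right_mem hcP
  by_cases hw : G.Adj w₁ w₂
  · refine Or.inl (h.typeTriangle_of_subset hQX hQZ hA h₁ h.branch.isInducedPath.reverse h₂ ?_
      (h.disjoint.mono_right hS₁).symm hd (h.disjoint.mono_right hS₂) hcw₁.symm hcw₂ hw ?_ ?_ h₁₂)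
    · exact Set.union_subset (Set.union_subset_union_left Q hS₁) (hS₂.trans Set.subset_union_left)
    · intro s hs t ht hst
      obtain rfl := h.eq_of_adj ht (hS₁ hs) hst.symm
      exact ⟨(hc₁ s hs).1 hst.symm, rfl⟩
    · intro s hs t ht hst
      obtain rfl := h.eq_of_adj hs (hS₂ ht) hst
      exact ⟨rfl, (hc₂ t ht).1 hst⟩
  have hcS₁ : c ∉ S₁ := fun hc => hcP (hS₁ hc)
  have hcS₂ : c ∉ S₂ := fun hc => hcP (hS₂ hc)
  have hdiff (S : Set V) : ({c} ∪ S) \ {c} ⊆ S := Set.union_sdiff_left.subset.trans Set.sdiff_subset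
  have hQc := h.branch.anticomplete_right
  have hcQ := h.branch.isInducedPath.right_mem
  refine Or.inr (h.typeClaw_of_subset hQX hQZ hA (h₁.cons hcS₁ hc₁) h.branch.isInducedPath.reverse
    (h₂.cons hcS₂ hc₂) (by grind) ?_ (hQc.symm.mono ((hdiff S₁).trans hS₁) subset_rfl) ?_
    (hQc.mono subset_rfl ((hdiff S₂).trans hS₂)))
  · have := h.disjoint
    grind
  · intro s hs t ht hst
    obtain ⟨rfl, rfl⟩ := h₁₂ s (hdiff S₁ hs) t (hdiff S₂ ht) hst
    exact hw hst

lemma typePath_or_typeClaw_or_typeTriangle (h : IsPathWithBranch G X Y Z P Q u v y c)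
    (hB : Minimal (Connects G X Y Z) B) (hPQB : P ∪ Q ⊆ B) (hBA : B ⊆ A) :
    TypePath G A X Y Z ∨ TypeClaw G A X Y Z ∨ TypeTriangle G A X Y Z := by
  have hA := hPQB.trans hBA
  by_cases hQX : Sees G Q X
  · have hQZ : Anticomplete G Q Z := by
      refine anticomplete_iff_not_sees.2 fun hQZ => ?_
      have hQ := h.branch.isInducedPath
      have hCQ : Connects G X Y Z Q :=
        ⟨hQ.connected, hQX, h.branch.sees_left.mono_left (Set.singleton_subset_iff.2 hQ.left_mem),
          hQZ⟩
      have huQ := hB.le_of_le hCQ (Set.subset_union_right.trans hPQB)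
        (hPQB (Or.inl h.path.isInducedPath.left_mem))
      exact Set.disjoint_left.1 h.disjoint huQ h.path.isInducedPath.left_mem
    have hcu := h.symm.adj_iff_eq_right_of_sees (connects_comm ▸ hB) hPQB hQX
    refine Or.inl (Or.inl ((h.symm.isDirectPath_union hcu hQZ).symm.typePathCenteredMid hA ?_))
    exact h.path.sees_left.mono_left
      (Set.singleton_subset_iff.2 (Or.inl h.path.isInducedPath.left_mem))
  by_cases hQZ : Sees G Q Z
  · have hcv := h.adj_iff_eq_right_of_sees hB hPQB hQZ
    refine Or.inl (Or.inr (Or.inr ((h.isDirectPath_union hcv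
      (anticomplete_iff_not_sees.2 hQX)).typePathCenteredMid hA ?_)))
    exact h.path.sees_right.mono_left
      (Set.singleton_subset_iff.2 (Or.inl h.path.isInducedPath.right_mem))
  rw [← anticomplete_iff_not_sees] at hQX hQZ
  rcases h.path.isInducedPath.exists_forall_adj_iff_or_exists_segments h.exists_adj with
    ⟨w, hw⟩ | ⟨w₁, w₂, S₁, S₂, h₁, h₂, hS₁, hS₂, hd, hc₁, hc₂, h₁₂⟩
  · obtain ⟨s, hs, hcs⟩ := h.exists_adj
    obtain rfl := (hw s hs).1 hcs
    exact Or.inr (Or.inl (h.typeClaw_of_forall_adj_iff hQX hQZ hA hs hw))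
  · rcases h.typeTriangle_or_typeClaw hQX hQZ hA h₁ h₂ hS₁ hS₂ hd hc₁ hc₂ h₁₂ with h | h
    exacts [Or.inr (Or.inr h), Or.inr (Or.inl h)]

end IsPathWithBranch

end Configurations

theorem statement_4_general {V : Type} [Fintype V] (G : SimpleGraph V) (A X Y Z : Set V)
    (hconn : (G.induce A).Connected)
    (hAX : Sees G A X) (hAY : Sees G A Y) (hAZ : Sees G A Z) :
    TypePath G A X Y Z ∨ TypeClaw G A X Y Z ∨ TypeTriangle G A X Y Z := by
  obtain ⟨B, hBA, hB⟩ :=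
    exists_minimal_le_of_wellFoundedLT (Connects G X Y Z) A ⟨hconn, hAX, hAY, hAZ⟩
  obtain ⟨hBconn, hBX, hBY, hBZ⟩ := hB.prop
  obtain ⟨P, u, v, hPB, hP⟩ := exists_isDirectPath hBconn hBX hBZ
  by_cases hPY : Sees G P Y
  · exact Or.inl (Or.inr (Or.inl (hP.typePathCenteredMid (hPB.trans hBA) hPY)))
  obtain ⟨Q, y, c, hQB, hQ, hQP⟩ := exists_isDirectPath_of_anticomplete hBconn hBY hPB
    ⟨u, hP.isInducedPath.left_mem⟩ (anticomplete_iff_not_sees.2 hPY)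
  exact IsPathWithBranch.typePath_or_typeClaw_or_typeTriangle
    ⟨hP, hQ, hQP, anticomplete_iff_not_sees.2 hPY⟩ hB (Set.union_subset hPB hQB) hBA

/-- If `A`, `X`, `Y`, `Z` are disjoint sets of vertices, `A` is connected
and `A` sees each of `X`, `Y` and `Z`, then `A` is of type path, claw or triangle with
respect to `X`, `Y` and `Z`. -/
theorem statement_4 {V : Type} [Fintype V] (G : SimpleGraph V) (A X Y Z : Set V)
    (hdisj : List.Pairwise Disjoint [A, X, Y, Z])
    (hconn : (G.induce A).Connected)
    (hAX : Sees G A X) (hAY : Sees G A Y) (hAZ : Sees G A Z) :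
    TypePath G A X Y Z ∨ TypeClaw G A X Y Z ∨ TypeTriangle G A X Y Z :=
  statement_4_general G A X Y Z hconn hAX hAY hAZ
end

section
/- Let G and H be graphs and let {X_v}_{v in V(H)} be a minimal induced minor model of H in G. Then for every vertex v of H, the subgraph of G induced by X_v contains no cycle of length greater than the degree of v in H. -/
open SimpleGraph

section AuxS7

variable {V : Type} {G : SimpleGraph V}

/-- Reachability within a vertex set: a walk whose support stays in `S`. -/
def ReachIn (G : SimpleGraph V) (S : Set V) (x y : V) : Prop :=
  ∃ p : G.Walk x y, ∀ z ∈ p.support, z ∈ S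

namespace ReachIn

lemma mem_left {S : Set V} {x y : V} (h : ReachIn G S x y) : x ∈ S := by
  obtain ⟨p, hp⟩ := h; exact hp x p.start_mem_support

lemma mem_right {S : Set V} {x y : V} (h : ReachIn G S x y) : y ∈ S := by
  obtain ⟨p, hp⟩ := h; exact hp y p.end_mem_support

lemma refl {S : Set V} {x : V} (h : x ∈ S) : ReachIn G S x x :=
  ⟨SimpleGraph.Walk.nil, by simpa using h⟩

lemma symm {S : Set V} {x y : V} (h : ReachIn G S x y) : ReachIn G S y x := by
  obtain ⟨p, hp⟩ := h
  exact ⟨p.reverse, fun z hz => hp z (by simpa using hz)⟩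

lemma trans {S : Set V} {x y z : V} (h1 : ReachIn G S x y) (h2 : ReachIn G S y z) :
    ReachIn G S x z := by
  obtain ⟨p, hp⟩ := h1; obtain ⟨q, hq⟩ := h2
  refine ⟨p.append q, fun w hw => ?_⟩
  rcases (SimpleGraph.Walk.mem_support_append_iff _ _).1 hw with h | h
  · exact hp _ h
  · exact hq _ h

lemma mono {S T : Set V} {x y : V} (hST : S ⊆ T) (h : ReachIn G S x y) :
    ReachIn G T x y := by
  obtain ⟨p, hp⟩ := h; exact ⟨p, fun z hz => hST (hp z hz)⟩

end ReachIn

lemma induce_reachable_of_reachIn {S : Set V} :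
    ∀ {x y : V} (p : G.Walk x y) (hp : ∀ z ∈ p.support, z ∈ S),
      (G.induce S).Reachable ⟨x, hp x p.start_mem_support⟩ ⟨y, hp y p.end_mem_support⟩
  | _, _, SimpleGraph.Walk.nil, _ => Reachable.refl _
  | x, y, SimpleGraph.Walk.cons h q, hp => by
      have hx : x ∈ S := hp x (by simp)
      have hq : ∀ z ∈ q.support, z ∈ S := fun z hz => hp z (by simp [hz])
      have h1 : (G.induce S).Adj ⟨x, hx⟩ ⟨_, hq _ q.start_mem_support⟩ := h
      exact h1.reachable.trans (induce_reachable_of_reachIn q hq)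

lemma reachIn_of_induce_walk {S : Set V} :
    ∀ {a b : ↥S} (_ : (G.induce S).Walk a b), ReachIn G S ↑a ↑b
  | a, _, SimpleGraph.Walk.nil =>
      ⟨SimpleGraph.Walk.nil, fun z hz => by simp at hz; rw [hz]; exact a.2⟩
  | a, b, SimpleGraph.Walk.cons h q => by
      refine ReachIn.trans ⟨SimpleGraph.Walk.cons h SimpleGraph.Walk.nil, ?_⟩
        (reachIn_of_induce_walk q)
      intro z hz
      change z ∈ [(a : V), _] at hz
      simp only [SimpleGraph.Walk.support_cons, SimpleGraph.Walk.support_nil,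
        List.mem_cons, List.mem_singleton] at hz
      rcases hz with hz | hz | hz
      · rw [hz]; exact a.2
      · rw [hz]; exact Subtype.prop _
      · cases hz

lemma connected_induce_iff' {S : Set V} :
    (G.induce S).Connected ↔ S.Nonempty ∧ ∀ x ∈ S, ∀ y ∈ S, ReachIn G S x y := by
  constructor
  · intro h
    refine ⟨?_, fun x hx y hy => ?_⟩
    · obtain ⟨⟨s, hs⟩⟩ := h.nonempty; exact ⟨s, hs⟩
    · obtain ⟨p⟩ := h.preconnected ⟨x, hx⟩ ⟨y, hy⟩
      exact reachIn_of_induce_walk p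
  · rintro ⟨⟨s, hs⟩, h⟩
    rw [connected_iff]
    refine ⟨?_, ⟨⟨s, hs⟩⟩⟩
    rintro ⟨x, hx⟩ ⟨y, hy⟩
    obtain ⟨p, hp⟩ := h x hx y hy
    exact induce_reachable_of_reachIn p hp

lemma exists_firstHit {S Cs : Set V} [DecidablePred (· ∈ Cs)] :
    ∀ {x y : V} (p : G.Walk x y), (∀ z ∈ p.support, z ∈ S) → y ∈ Cs →
      ∃ cv ∈ Cs, ∃ q : G.Walk x cv, (∀ z ∈ q.support, z ∈ S) ∧
        (∀ z ∈ q.support, z ∈ Cs → z = cv)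
  | x, _, SimpleGraph.Walk.nil, hS, hy =>
      ⟨x, hy, SimpleGraph.Walk.nil, hS, by simp⟩
  | x, y, SimpleGraph.Walk.cons h q, hS, hy => by
    by_cases hx : x ∈ Cs
    · refine ⟨x, hx, SimpleGraph.Walk.nil, ?_, by simp⟩
      intro z hz; simp at hz; rw [hz]; exact hS x (by simp)
    · obtain ⟨cv, hcv, q', hq'S, hq'F⟩ :=
        exists_firstHit q (fun z hz => hS z (by simp [hz])) hy
      refine ⟨cv, hcv, SimpleGraph.Walk.cons h q', ?_, ?_⟩
      · intro z hz
        simp only [SimpleGraph.Walk.support_cons, List.mem_cons] at hz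
        rcases hz with hz | hz
        · subst hz; exact hS _ (by simp)
        · exact hq'S z hz
      · intro z hz hzC
        simp only [SimpleGraph.Walk.support_cons, List.mem_cons] at hz
        rcases hz with hz | hz
        · subst hz; exact absurd hzC hx
        · exact hq'F z hz hzC

lemma avoid_end_takeUntil [DecidableEq V] {x a b : V} (p : G.Walk x a) (hp : p.IsPath)
    (hb : b ∈ p.support) (hba : b ≠ a) : a ∉ (p.takeUntil b hb).support := by
  intro hmem
  have hnodup : ((p.takeUntil b hb).support ++ (p.dropUntil b hb).support.tail).Nodup := by
    rw [← SimpleGraph.Walk.support_append, SimpleGraph.Walk.take_spec]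
    exact hp.support_nodup
  have hA : a ∈ (p.dropUntil b hb).support.tail :=
    SimpleGraph.Walk.end_mem_tail_support_of_ne hba _
  exact (List.disjoint_of_nodup_append hnodup) hmem hA

lemma cycle_conn_avoid_base [DecidableEq V] {a : V} {c : G.Walk a a} (hc : c.IsCycle)
    {b b' : V} (hb : b ∈ c.support) (hb' : b' ∈ c.support) (hba : b ≠ a) (hb'a : b' ≠ a) :
    ∃ q : G.Walk b b', a ∉ q.support := by
  cases c with
  | nil => exact absurd rfl hc.ne_nil
  | @cons _ v _ hadj p =>
    have hp : p.IsPath := ((SimpleGraph.Walk.cons_isCycle_iff p hadj).1 hc).1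
    have hbp : b ∈ p.support := by
      rcases (by simpa using hb : b = a ∨ b ∈ p.support) with h | h
      · exact absurd h hba
      · exact h
    have hb'p : b' ∈ p.support := by
      rcases (by simpa using hb' : b' = a ∨ b' ∈ p.support) with h | h
      · exact absurd h hb'a
      · exact h
    refine ⟨((p.takeUntil b hbp).reverse).append (p.takeUntil b' hb'p), ?_⟩
    intro hmem
    rcases (SimpleGraph.Walk.mem_support_append_iff _ _).1 hmem with h | h
    · rw [SimpleGraph.Walk.support_reverse, List.mem_reverse] at h
      exact avoid_end_takeUntil p hp hbp hba h
    · exact avoid_end_takeUntil p hp hb'p hb'a h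

lemma closed_walk_mem_tail {u x : V} {c : G.Walk u u} (hnil : ¬c.Nil)
    (hx : x ∈ c.support) : x ∈ c.support.tail := by
  cases c with
  | nil => exact absurd SimpleGraph.Walk.nil_nil hnil
  | cons h p =>
    simp only [SimpleGraph.Walk.support_cons, List.tail_cons]
    rcases (by simpa using hx : x = u ∨ x ∈ p.support) with h' | h'
    · subst h'; exact p.end_mem_support
    · exact h'

lemma cycle_conn_avoid {u : V} {c : G.Walk u u} (hc : c.IsCycle) {a b b' : V}
    (ha : a ∈ c.support) (hb : b ∈ c.support) (hb' : b' ∈ c.support)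
    (hba : b ≠ a) (hb'a : b' ≠ a) : ∃ q : G.Walk b b', a ∉ q.support := by
  classical
  have hc' := hc.rotate ha
  have hrot := SimpleGraph.Walk.support_rotate c a ha
  have hmem : ∀ x : V, x ∈ c.support → x ∈ (c.rotate a ha).support := by
    intro x hx
    have h1 : x ∈ c.support.tail := closed_walk_mem_tail hc.not_nil hx
    have h2 : x ∈ (c.rotate a ha).support.tail := hrot.mem_iff.2 h1
    exact List.mem_of_mem_tail h2
  exact cycle_conn_avoid_base hc' (hmem b hb) (hmem b' hb') hba hb'a

/-- Isomorphism between a nested induced subgraph and the directly induced subgraph. -/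
def induceInduceIso (G : SimpleGraph V) (U T : Set V) (h : T ⊆ U) :
    (G.induce U).induce (Subtype.val ⁻¹' T) ≃g G.induce T where
  toFun := fun x => ⟨x.1.1, x.2⟩
  invFun := fun x => ⟨⟨x.1, h x.2⟩, x.2⟩
  left_inv := fun x => rfl
  right_inv := fun x => rfl
  map_rel_iff' := Iff.rfl

end AuxS7


/-- If `{X_v}` is a minimal induced minor model of `H` in `G`, then for
every vertex `v` of `H`, the subgraph of `G` induced by `X v` has no cycle of length
greater than the degree of `v` in `H`. -/
theorem statement_7 {V W : Type} [Fintype V] [Fintype W]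
    (G : SimpleGraph V) (H : SimpleGraph W) [DecidableRel H.Adj] (X : W → Set V)
    (hmodel : IsInducedMinorModel G H X)
    (hmin : ∀ a ∈ ⋃ w, X w, ¬ContainsInducedMinor (G.induce ((⋃ w, X w) \ {a})) H)
    (v : W) (u : ↥(X v)) (c : (G.induce (X v)).Walk u u) (hc : c.IsCycle) :
    c.length ≤ H.degree v := by
  classical
  by_contra hlen
  push_neg at hlen
  obtain ⟨hne, hconn, hdisj, hsees⟩ := hmodel
  let Cs : Set V := {x | ∃ h : x ∈ X v, (⟨x, h⟩ : ↥(X v)) ∈ c.support}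
  let T : Finset ↥(X v) := c.support.tail.toFinset
  have hCsT : ∀ b : ↥(X v), b ∈ T → (b : V) ∈ Cs := fun b hb =>
    ⟨b.2, List.mem_of_mem_tail (List.mem_toFinset.1 hb)⟩
  let A : W → Set V := fun w => {x | x ∈ X v ∧ ∃ y ∈ X w, G.Adj x y}
  let K : V → Set V := fun a => {x | ∃ cv, cv ∈ Cs ∧ cv ≠ a ∧ ReachIn G (X v \ {a}) x cv}
  have hKsub : ∀ a, K a ⊆ X v \ {a} := by
    rintro a x ⟨cv, _, _, hr⟩; exact hr.mem_left
  let ι : G.induce (X v) →g G := ⟨Subtype.val, fun {p q} h => h⟩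
  have hCconn : ∀ a ∈ Cs, ∀ b ∈ Cs, ∀ b' ∈ Cs, b ≠ a → b' ≠ a →
      ReachIn G (X v \ {a}) b b' := by
    rintro a ⟨haX, haC⟩ b ⟨hbX, hbC⟩ b' ⟨hb'X, hb'C⟩ hba hb'a
    obtain ⟨q, hq⟩ := cycle_conn_avoid hc haC hbC hb'C
      (fun h => hba (congrArg Subtype.val h)) (fun h => hb'a (congrArg Subtype.val h))
    refine ⟨q.map ι, ?_⟩
    intro z hz
    rw [SimpleGraph.Walk.support_map, List.mem_map] at hz
    obtain ⟨z₀, hz₀, rfl⟩ := hz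
    refine ⟨z₀.2, fun hEq => ?_⟩
    rw [Set.mem_singleton_iff] at hEq
    exact hq (by rwa [show z₀ = ⟨a, haX⟩ from Subtype.ext hEq] at hz₀)
  have huC : (u : V) ∈ Cs := ⟨u.2, c.start_mem_support⟩
  have hAne : ∀ w, H.Adj v w → (A w).Nonempty := by
    intro w hw
    obtain ⟨x, hx, y, hy, hxy⟩ := (hsees v w hw.ne).2 hw
    exact ⟨x, hx, y, hy, hxy⟩
  have hNotBoth : ∀ w, H.Adj v w → ∀ a ∈ Cs, ∀ b ∈ Cs, a ≠ b →
      A w ∩ K a = ∅ → A w ∩ K b = ∅ → False := by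
    intro w hw a haC b hbC hab hKa hKb
    obtain ⟨x, hxA⟩ := hAne w hw
    obtain ⟨p, hpS⟩ := (connected_induce_iff'.1 (hconn v)).2 x hxA.1 ↑u u.2
    obtain ⟨cv, hcvC, q, hqS, hqF⟩ := exists_firstHit (Cs := Cs) p hpS huC
    have helper : ∀ a', a' ∈ Cs → A w ∩ K a' = ∅ → cv ≠ a' → False := by
      intro a' ha'C hK hne'
      have hnotin : a' ∉ q.support := fun hmem => hne' ((hqF a' hmem ha'C).symm)
      have hxK : x ∈ K a' := by
        refine ⟨cv, hcvC, hne', q, fun z hz => ⟨hqS z hz, fun hzz => ?_⟩⟩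
        rw [Set.mem_singleton_iff] at hzz
        exact hnotin (hzz ▸ hz)
      exact Set.eq_empty_iff_forall_notMem.1 hK x ⟨hxA, hxK⟩
    by_cases hcva : cv = a
    · exact helper b hbC hKb (by rw [hcva]; exact hab)
    · exact helper a haC hKa hcva
  have hTcard : T.card = c.length := by
    rw [List.toFinset_card_of_nodup hc.support_nodup, List.length_tail,
      SimpleGraph.Walk.length_support]
    omega
  have hgood : ∃ a ∈ T, ∀ w, H.Adj v w → (A w ∩ K ↑a).Nonempty := by
    by_contra hno
    push_neg at hno
    have hno' : ∀ a : ↥(X v), ∃ w : W, a ∈ T → H.Adj v w ∧ A w ∩ K ↑a = ∅ := by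
      intro a
      by_cases ha : a ∈ T
      · obtain ⟨w, hw1, hw2⟩ := hno a ha
        exact ⟨w, fun _ => ⟨hw1, hw2⟩⟩
      · exact ⟨v, fun h => absurd h ha⟩
    choose f hf using hno'
    have hmaps : ∀ a ∈ T, f a ∈ H.neighborFinset v := by
      intro a ha; rw [SimpleGraph.mem_neighborFinset]; exact (hf a ha).1
    have hlt : (H.neighborFinset v).card < T.card := by rw [hTcard]; exact hlen
    obtain ⟨a, haT, b, hbT, hab, hfeq⟩ :=
      Finset.exists_ne_map_eq_of_card_lt_of_maps_to hlt hmaps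
    refine hNotBoth (f a) (hf a haT).1 ↑a (hCsT a haT) ↑b (hCsT b hbT)
      (fun h => hab (Subtype.ext h)) (hf a haT).2 ?_
    rw [hfeq]; exact (hf b hbT).2
  obtain ⟨a₀, ha₀T, hgoodA⟩ := hgood
  have haX : (a₀ : V) ∈ X v := a₀.2
  have haC : (a₀ : V) ∈ Cs := hCsT a₀ ha₀T
  have hTbig : 1 < T.card := by rw [hTcard]; have := hc.three_le_length; omega
  obtain ⟨b₀, hb₀T, hb₀ne⟩ := Finset.exists_mem_ne hTbig a₀
  have hbK : (b₀ : V) ∈ K ↑a₀ := by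
    refine ⟨↑b₀, hCsT b₀ hb₀T, fun h => hb₀ne (Subtype.ext h), ReachIn.refl ?_⟩
    exact ⟨b₀.2, fun h => hb₀ne (Subtype.ext (Set.mem_singleton_iff.1 h))⟩
  have hclosure : ∀ x y, x ∈ K ↑a₀ → ReachIn G (X v \ {↑a₀}) x y → y ∈ K ↑a₀ := by
    rintro x y ⟨cv, hcvC, hcvne, hr⟩ hxy
    exact ⟨cv, hcvC, hcvne, hxy.symm.trans hr⟩
  have hKconn : (G.induce (K ↑a₀)).Connected := by
    rw [connected_induce_iff']
    refine ⟨⟨↑b₀, hbK⟩, ?_⟩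
    intro x hx y hy
    obtain ⟨cx, hcxC, hcxne, hrx⟩ := hx
    obtain ⟨cy, hcyC, hcyne, hry⟩ := hy
    have hxy : ReachIn G (X v \ {↑a₀}) x y :=
      (hrx.trans (hCconn ↑a₀ haC cx hcxC cy hcyC hcxne hcyne)).trans hry.symm
    obtain ⟨p, hp⟩ := hxy
    refine ⟨p, fun z hz => ?_⟩
    exact hclosure x z ⟨cx, hcxC, hcxne, hrx⟩
      ⟨p.takeUntil z hz, fun t ht => hp t (SimpleGraph.Walk.support_takeUntil_subset _ _ ht)⟩
  have haU : (↑a₀ : V) ∈ ⋃ w, X w := Set.mem_iUnion.2 ⟨v, haX⟩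
  apply hmin ↑a₀ haU
  set U : Set V := (⋃ w, X w) \ {(↑a₀ : V)} with hUdef
  let Y : W → Set V := fun w => if w = v then K ↑a₀ else X w
  have hnotmem : ∀ w, w ≠ v → (↑a₀ : V) ∉ X w := by
    intro w hw hmem
    exact Set.disjoint_left.1 (hdisj hw) hmem haX
  have hYsub : ∀ w, Y w ⊆ U := by
    intro w x hx
    by_cases hwv : w = v
    · subst hwv
      simp only [Y, if_pos rfl] at hx
      obtain ⟨h1, h2⟩ := hKsub _ hx
      exact ⟨Set.mem_iUnion.2 ⟨w, h1⟩, h2⟩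
    · simp only [Y, if_neg hwv] at hx
      exact ⟨Set.mem_iUnion.2 ⟨w, hx⟩, fun h =>
        hnotmem w hwv ((Set.mem_singleton_iff.1 h) ▸ hx)⟩
  have hYsubX : ∀ w, Y w ⊆ X w := by
    intro w x hx
    by_cases hwv : w = v
    · subst hwv; simp only [Y, if_pos rfl] at hx; exact (hKsub _ hx).1
    · simpa only [Y, if_neg hwv] using hx
  refine ⟨fun w => Subtype.val ⁻¹' (Y w), ?_, ?_, ?_, ?_⟩
  · intro w
    by_cases hwv : w = v
    · subst hwv
      have hY : (↑b₀ : V) ∈ Y w := by simp only [Y, if_pos rfl]; exact hbK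
      exact ⟨⟨↑b₀, hYsub w hY⟩, hY⟩
    · obtain ⟨x, hx⟩ := hne w
      have hY : x ∈ Y w := by simp only [Y, if_neg hwv]; exact hx
      exact ⟨⟨x, hYsub w hY⟩, hY⟩
  · intro w
    rw [(induceInduceIso G U (Y w) (hYsub w)).connected_iff]
    by_cases hwv : w = v
    · subst hwv; show (G.induce (if w = w then K ↑a₀ else X w)).Connected
      rw [if_pos rfl]; exact hKconn
    · show (G.induce (if w = v then K ↑a₀ else X w)).Connected
      rw [if_neg hwv]; exact hconn w
  · intro w1 w2 hne12
    exact ((hdisj hne12).mono (hYsubX w1) (hYsubX w2)).preimage _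
  · intro w1 w2 hne12
    have hseesU : ∀ P Q : Set V, P ⊆ U → Q ⊆ U →
        (Sees (G.induce U) (Subtype.val ⁻¹' P) (Subtype.val ⁻¹' Q) ↔ Sees G P Q) := by
      intro P Q hP hQ
      constructor
      · rintro ⟨x, hx, y, hy, hxy⟩; exact ⟨↑x, hx, ↑y, hy, hxy⟩
      · rintro ⟨x, hx, y, hy, hxy⟩; exact ⟨⟨x, hP hx⟩, hx, ⟨y, hQ hy⟩, hy, hxy⟩
    rw [hseesU _ _ (hYsub w1) (hYsub w2)]
    by_cases h1 : w1 = v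
    · subst h1
      simp only [Y, if_pos rfl, if_neg (Ne.symm hne12)]
      constructor
      · rintro ⟨x, hx, y, hy, hxy⟩
        exact (hsees w1 w2 hne12).1 ⟨x, (hKsub _ hx).1, y, hy, hxy⟩
      · intro hadj
        obtain ⟨x, ⟨hxX, y, hy, hxy⟩, hxK⟩ := hgoodA w2 hadj
        exact ⟨x, hxK, y, hy, hxy⟩
    · by_cases h2 : w2 = v
      · subst h2
        simp only [Y, if_pos rfl, if_neg h1]
        constructor
        · rintro ⟨x, hx, y, hy, hxy⟩
          exact ((hsees w2 w1 (Ne.symm h1)).1 ⟨y, (hKsub _ hy).1, x, hx, hxy.symm⟩).symm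
        · intro hadj
          obtain ⟨x, ⟨hxX, y, hy, hxy⟩, hxK⟩ := hgoodA w1 hadj.symm
          exact ⟨y, hy, x, hxK, hxy.symm⟩
      · simp only [Y, if_neg h1, if_neg h2]
        exact hsees w1 w2 hne12
end

section
/- Let {X_v}_{v in V(H)} be a minimal induced minor model of a graph H in a graph G, and let v be a vertex of H. For every vertex w in X_v whose degree in the subgraph of G induced by X_v is one, there exists a vertex u of H distinct from v such that w is the only vertex of X_v having a neighbor in X_u. -/
open SimpleGraph

/-! Deleting a leaf `w` of a branch set `X v` keeps `X v` connected, and it keeps every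
adjacency between branch sets unless `w` is the only vertex of `X v` attached to some `X u`.
Otherwise the branch sets minus `w` would be a smaller model, contradicting minimality. -/

namespace SimpleGraph

variable {V : Type} {G : SimpleGraph V}

def induceInduceIso {S T : Set V} (hTS : T ⊆ S) :
    (G.induce S).induce (Subtype.val ⁻¹' T) ≃g G.induce T where
  toFun x := ⟨x.1.1, x.2⟩
  invFun x := ⟨⟨x.1, hTS x.2⟩, x.2⟩
  map_rel_iff' := Iff.rfl

lemma connected_induce_diff_singleton_of_existsUnique_adj {T : Set V}
    (hT : (G.induce T).Connected) {w : V} (hw : w ∈ T) (hdeg : ∃! y, y ∈ T ∧ G.Adj w y) :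
    (G.induce (T \ {w})).Connected := by
  obtain ⟨y, hyT, hwy⟩ := hdeg.exists
  have hleaf : ∀ x ∉ (Subtype.val ⁻¹' (T \ {w}) : Set T),
      ((G.induce T).neighborSet x).Subsingleton := by
    rintro ⟨x, hxT⟩ hx a ha b hb
    obtain rfl : x = w := by simpa [hxT] using hx
    exact Subtype.ext (hdeg.unique ⟨a.2, ha⟩ ⟨b.2, hb⟩)
  refine (induceInduceIso Set.sdiff_subset).connected_iff.mp ((connected_iff _).mpr ⟨?_, ?_⟩)
  · exact hT.preconnected.induce_of_degree_eq_one hleaf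
  · exact ⟨⟨⟨y, hyT⟩, hyT, hwy.ne'⟩⟩

end SimpleGraph

section InducedMinorModel

variable {V W : Type} {G : SimpleGraph V} {H : SimpleGraph W}

lemma sees_comm {A B : Set V} : Sees G A B ↔ Sees G B A :=
  ⟨fun ⟨a, ha, b, hb, hab⟩ => ⟨b, hb, a, ha, hab.symm⟩,
    fun ⟨b, hb, a, ha, hab⟩ => ⟨a, ha, b, hb, hab.symm⟩⟩

lemma Sees.mono {A A' B B' : Set V} (hA : A ⊆ A') (hB : B ⊆ B') :
    Sees G A B → Sees G A' B' := by
  rintro ⟨a, ha, b, hb, hab⟩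
  exact ⟨a, hA ha, b, hB hb, hab⟩

lemma IsInducedMinorModel.induce_preimage {X : W → Set V} (hX : IsInducedMinorModel G H X)
    {S : Set V} (hXS : ∀ u, X u ⊆ S) :
    IsInducedMinorModel (G.induce S) H fun u => Subtype.val ⁻¹' X u := by
  obtain ⟨hne, hconn, hdisj, hsees⟩ := hX
  refine ⟨fun u => ?_, fun u => ?_, fun u u' huu' => (hdisj huu').preimage _,
    fun u u' huu' => ?_⟩
  · obtain ⟨x, hx⟩ := hne u
    exact ⟨⟨x, hXS u hx⟩, hx⟩
  · exact (induceInduceIso (hXS u)).connected_iff.mpr (hconn u)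
  · rw [← hsees u u' huu']
    constructor
    · rintro ⟨x, hx, y, hy, hxy⟩
      exact ⟨x, hx, y, hy, hxy⟩
    · rintro ⟨x, hx, y, hy, hxy⟩
      exact ⟨⟨x, hXS u hx⟩, hx, ⟨y, hXS u' hy⟩, hy, hxy⟩

lemma IsInducedMinorModel.diff_singleton {X : W → Set V} (hX : IsInducedMinorModel G H X)
    {v : W} {w : V} (hw : w ∈ X v) (hdeg : ∃! y, y ∈ X v ∧ G.Adj w y)
    (hsees : ∀ u ≠ v, Sees G (X v) (X u) → Sees G (X v \ {w}) (X u)) :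
    IsInducedMinorModel G H fun u => X u \ {w} := by
  obtain ⟨hne, hconn, hdisj, hadj⟩ := hX
  have hother : ∀ u ≠ v, X u \ {w} = X u := fun u hu =>
    Set.sdiff_singleton_eq_self fun hwu => Set.disjoint_left.mp (hdisj hu) hwu hw
  have hsees_v : ∀ u ≠ v, Sees G (X v \ {w}) (X u) ↔ Sees G (X v) (X u) := fun u hu =>
    ⟨Sees.mono Set.sdiff_subset subset_rfl, hsees u hu⟩
  refine ⟨fun u => ?_, fun u => ?_, fun u u' huu' => ?_, fun u u' huu' => ?_⟩ <;> dsimp only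
  · by_cases hu : u = v
    · obtain ⟨y, hy, hwy⟩ := hdeg.exists
      exact hu ▸ ⟨y, hy, hwy.ne'⟩
    · rw [hother u hu]; exact hne u
  · by_cases hu : u = v
    · exact hu ▸ SimpleGraph.connected_induce_diff_singleton_of_existsUnique_adj (hconn v) hw hdeg
    · rw [hother u hu]; exact hconn u
  · exact (hdisj huu').mono Set.sdiff_subset Set.sdiff_subset
  · rw [← hadj u u' huu']
    by_cases hu : u = v
    · subst hu
      rw [hother u' (Ne.symm huu'), hsees_v u' (Ne.symm huu')]
    by_cases hu' : u' = v
    · subst hu'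
      rw [hother u hu, sees_comm, hsees_v u hu, sees_comm]
    · rw [hother u hu, hother u' hu']

end InducedMinorModel

theorem statement_8_general {V W : Type}
    (G : SimpleGraph V) (H : SimpleGraph W) (X : W → Set V)
    (hmodel : IsInducedMinorModel G H X)
    (hmin : ∀ a ∈ ⋃ w, X w, ¬ContainsInducedMinor (G.induce ((⋃ w, X w) \ {a})) H)
    (v : W) (w : V) (hw : w ∈ X v)
    (hdeg : ∃! y, y ∈ X v ∧ G.Adj w y) :
    ∃ u, u ≠ v ∧ {w' | w' ∈ X v ∧ ∃ y ∈ X u, G.Adj w' y} = {w} := by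
  by_contra! hnot
  have hsees : ∀ u ≠ v, Sees G (X v) (X u) → Sees G (X v \ {w}) (X u) := by
    rintro u hu ⟨x, hx, y, hy, hxy⟩
    obtain ⟨x', ⟨hx', y', hy', hxy'⟩, hx'w⟩ : ∃ x' ∈ {w' | w' ∈ X v ∧ ∃ y ∈ X u, G.Adj w' y},
        x' ≠ w := by
      by_contra! hall
      exact hnot u hu (Set.eq_singleton_iff_nonempty_unique_mem.mpr ⟨⟨x, hx, y, hy, hxy⟩, hall⟩)
    exact ⟨x', ⟨hx', hx'w⟩, y', hy', hxy'⟩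
  have hsmaller := (hmodel.diff_singleton hw hdeg hsees).induce_preimage fun u =>
    Set.sdiff_subset_sdiff_left (Set.subset_iUnion X u)
  exact hmin w (Set.mem_iUnion_of_mem v hw) ⟨_, hsmaller⟩

/-- If `{X_v}` is a minimal induced minor model of `H` in `G`, `v` is a
vertex of `H`, and `w ∈ X v` has degree one in the subgraph induced by `X v` (i.e. it has
a unique neighbor in `X v`), then there is `u ≠ v` such that `w` is the only vertex of
`X v` having a neighbor in `X u`. -/
theorem statement_8 {V W : Type} [Fintype V] [Fintype W]
    (G : SimpleGraph V) (H : SimpleGraph W) (X : W → Set V)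
    (hmodel : IsInducedMinorModel G H X)
    (hmin : ∀ a ∈ ⋃ w, X w, ¬ContainsInducedMinor (G.induce ((⋃ w, X w) \ {a})) H)
    (v : W) (w : V) (hw : w ∈ X v)
    (hdeg : ∃! y, y ∈ X v ∧ G.Adj w y) :
    ∃ u, u ≠ v ∧ {w' | w' ∈ X v ∧ ∃ y ∈ X u, G.Adj w' y} = {w} :=
  statement_8_general G H X hmodel hmin v w hw hdeg
end
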